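/- Let q ≥ 2, θ ∈ ℝ, and T(N) := (1/N) Σ_{n=0}^{N−1} exp(2πi · s_q(n) · θ). If N has q-adic expansion N = Σ_{r=0}^R a_r q^r with digits a_r ∈ {0,…,q−1}, then N·|T(N)| ≤ Σ_{r=0}^R a_r q^r |T(q^r)|. -/

import Mathlib

open Finset Real

/-- `T(N) = (1/N) Σ_{n=0}^{N−1} exp(2πi · s_q(n) · θ)`, where `s_q` is the `q`-ary
sum-of-digits function. -/
noncomputable def Tsod (q : ℕ) (θ : ℝ) (N : ℕ) : ℂ :=
  (N : ℂ)⁻¹ * ∑ n ∈ Finset.range N,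
    Complex.exp (2 * Real.pi * Complex.I * ((Nat.digits q n).sum : ℂ) * (θ : ℂ))

/-!
Write `S(N) = N · T(N)` for the unnormalised sum and `e(n) = exp(2πi s_q(n) θ)`, a unimodular
number. Since `s_q(q^k m + n) = s_q(m) + s_q(n)` for `n < q^k`, one has
`S(q^k m + c) = S(q^k m) + e(m) S(c)` whenever `c ≤ q^k`. Applied with `c = q^k` this gives
`|S(q^k a)| ≤ a |S(q^k)|`; applied with `m` the leading digit of `N` and `c` the number formed by
the remaining digits it gives `|S(N)| ≤ a_R |S(q^R)| + |S(N - a_R q^R)|`, and induction on the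
number of digits concludes.
-/

theorem Nat.sum_digits_pow_mul_add {b k n : ℕ} (hb : 1 < b) (hn : n < b ^ k) (m : ℕ) :
    (b.digits (b ^ k * m + n)).sum = (b.digits m).sum + (b.digits n).sum := by
  rcases Nat.eq_zero_or_pos m with rfl | hm
  · simp
  obtain ⟨j, rfl⟩ := Nat.exists_eq_add_of_le ((Nat.digits_length_le_iff hb n).mpr hn)
  rw [add_comm, ← Nat.digits_append_zeroes_append_digits hb hm]
  simp [add_comm]

theorem Nat.sum_range_mul_pow_lt {b : ℕ} {a : ℕ → ℕ} {n : ℕ} (ha : ∀ r < n, a r < b) :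
    ∑ r ∈ range n, a r * b ^ r < b ^ n := by
  induction n with
  | zero => simp
  | succ n ih =>
    have hlow := ih fun r hr => ha r (by omega)
    have htop : a n + 1 ≤ b := ha n (by omega)
    calc ∑ r ∈ range (n + 1), a r * b ^ r
        < (a n + 1) * b ^ n := by rw [sum_range_succ]; linarith
      _ ≤ b ^ (n + 1) := by rw [pow_succ']; exact Nat.mul_le_mul_right _ htop

namespace Tsod

noncomputable def summand (q : ℕ) (θ : ℝ) (n : ℕ) : ℂ :=
  Complex.exp (2 * π * Complex.I * ((Nat.digits q n).sum : ℂ) * θ)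

noncomputable def partialSum (q : ℕ) (θ : ℝ) (N : ℕ) : ℂ :=
  ∑ n ∈ range N, summand q θ n

variable {q : ℕ} {θ : ℝ}

theorem norm_summand (n : ℕ) : ‖summand q θ n‖ = 1 := by
  have h : 2 * π * Complex.I * ((Nat.digits q n).sum : ℂ) * θ
      = ((2 * π * (Nat.digits q n).sum * θ : ℝ) : ℂ) * Complex.I := by
    simp only [Complex.ofReal_mul, Complex.ofReal_natCast, Complex.ofReal_ofNat]
    ring
  rw [summand, h, Complex.norm_exp_ofReal_mul_I]

theorem summand_pow_mul_add (hq : 1 < q) {k n : ℕ} (hn : n < q ^ k) (m : ℕ) :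
    summand q θ (q ^ k * m + n) = summand q θ m * summand q θ n := by
  rw [summand, summand, summand, ← Complex.exp_add, Nat.sum_digits_pow_mul_add hq hn,
    Nat.cast_add]
  congr 1
  ring

theorem partialSum_pow_mul_add (hq : 1 < q) {k c : ℕ} (hc : c ≤ q ^ k) (m : ℕ) :
    partialSum q θ (q ^ k * m + c) =
      partialSum q θ (q ^ k * m) + summand q θ m * partialSum q θ c := by
  rw [partialSum, partialSum, partialSum, sum_range_add, mul_sum]
  congr 1
  exact sum_congr rfl fun n hn => summand_pow_mul_add hq ((mem_range.mp hn).trans_le hc) m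

theorem norm_partialSum_pow_mul_add_le (hq : 1 < q) {k c : ℕ} (hc : c ≤ q ^ k) (m : ℕ) :
    ‖partialSum q θ (q ^ k * m + c)‖ ≤ ‖partialSum q θ (q ^ k * m)‖ + ‖partialSum q θ c‖ := by
  rw [partialSum_pow_mul_add hq hc]
  simpa [norm_summand] using
    norm_add_le (partialSum q θ (q ^ k * m)) (summand q θ m * partialSum q θ c)

theorem norm_partialSum_pow_mul_le (hq : 1 < q) (k a : ℕ) :
    ‖partialSum q θ (q ^ k * a)‖ ≤ a * ‖partialSum q θ (q ^ k)‖ := by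
  induction a with
  | zero => simp [partialSum]
  | succ a ih =>
    rw [mul_add_one]
    push_cast
    linarith [norm_partialSum_pow_mul_add_le (θ := θ) hq (le_refl (q ^ k)) a]

theorem norm_partialSum_digits_le (hq : 1 < q) {a : ℕ → ℕ} {n : ℕ} (ha : ∀ r < n, a r < q) :
    ‖partialSum q θ (∑ r ∈ range n, a r * q ^ r)‖ ≤
      ∑ r ∈ range n, a r * ‖partialSum q θ (q ^ r)‖ := by
  induction n with
  | zero => simp [partialSum]
  | succ n ih =>
    have hlow := Nat.sum_range_mul_pow_lt fun r (hr : r < n) => ha r (by omega)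
    rw [sum_range_succ, sum_range_succ, add_comm, mul_comm (a n)]
    linarith [norm_partialSum_pow_mul_add_le (θ := θ) hq hlow.le (a n),
      norm_partialSum_pow_mul_le (θ := θ) hq n (a n), ih fun r hr => ha r (by omega)]

theorem natCast_mul_norm_Tsod (N : ℕ) : (N : ℝ) * ‖Tsod q θ N‖ = ‖partialSum q θ N‖ := by
  rcases N.eq_zero_or_pos with rfl | hN
  · simp [partialSum]
  rw [Tsod, norm_mul, norm_inv, Complex.norm_natCast, ← mul_assoc,
    mul_inv_cancel₀ (by positivity), one_mul]
  rfl

end Tsod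

/-- If `N = Σ_{r=0}^R a_r q^r` with digits `a_r ∈ {0,…,q−1}`, then
`N·|T(N)| ≤ Σ_{r=0}^R a_r q^r |T(q^r)|`. -/
theorem Tsod_digit_bound (q : ℕ) (hq : 2 ≤ q) (θ : ℝ) (R : ℕ) (a : ℕ → ℕ)
    (ha : ∀ r ≤ R, a r < q) (N : ℕ)
    (hN : N = ∑ r ∈ Finset.range (R + 1), a r * q ^ r) :
    (N : ℝ) * ‖Tsod q θ N‖ ≤
      ∑ r ∈ Finset.range (R + 1),
        (a r : ℝ) * (q : ℝ) ^ r * ‖Tsod q θ (q ^ r)‖ := by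
  have h := Tsod.norm_partialSum_digits_le (θ := θ) hq fun r hr => ha r (Nat.lt_succ_iff.mp hr)
  rw [Tsod.natCast_mul_norm_Tsod, hN]
  refine h.trans_eq (sum_congr rfl fun r _ => ?_)
  rw [mul_assoc, ← Nat.cast_pow, Tsod.natCast_mul_norm_Tsod]
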